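/- arXiv:1912.02245 — 5 statements merged into one kernel-verified Lean document; each statement's English description precedes it below -/
import Mathlib

section
/- Let n ≥ 2, A ∈ ℝ^{n×n}, c ∈ ℝ^n, and let μ_1, …, μ_n be Borel probability measures on ℝ such that for every 1 ≤ i ≤ n, μ_i([c_i + Σ_{j=1}^n |a_{ij}|, ∞)) > 0 and μ_i((−∞, c_i − Σ_{j=1}^n |a_{ij}|)) > 0. Define the matrix P on {0,1}^n by P(u,s) = ∏_{i=1}^n μ_i([c_i − (Au)_i, ∞))^{s_i} · μ_i((−∞, c_i − (Au)_i))^{1−s_i}. Then P(u,s) > 0 for all u, s ∈ {0,1}^n; consequently P is a row-stochastic matrix with all entries positive, it admits a unique stationary probability vector π (i.e., Σ_u π(u) P(u,s) = π(s) for all s), this π satisfies π(s) > 0 for every s ∈ {0,1}^n, and for every u, s ∈ {0,1}^n the k-step transition probabilities converge: P^k(u,s) → π(s) as k → ∞. -/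
open MeasureTheory Matrix Filter

/-- The real value of a binary observation coordinate. -/
def bval (b : Bool) : ℝ := if b then 1 else 0


open Finset in
theorem markov_main {ι : Type*} [Fintype ι] [DecidableEq ι] [Nonempty ι]
    (P : Matrix ι ι ℝ) (hpos : ∀ u s, 0 < P u s) (hrow : ∀ u, ∑ s, P u s = 1) :
    ∃ π : ι → ℝ,
      ((∀ s, 0 ≤ π s) ∧ (∑ s, π s = 1) ∧ (∀ s, ∑ u, π u * P u s = π s)) ∧
      (∀ π' : ι → ℝ,
        ((∀ s, 0 ≤ π' s) ∧ (∑ s, π' s = 1) ∧ (∀ s, ∑ u, π' u * P u s = π' s)) → π' = π) ∧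
      (∀ s, 0 < π s) ∧
      (∀ u s, Tendsto (fun k : ℕ => (P ^ k) u s) atTop (nhds (π s))) := by
  classical
  have hne : (univ : Finset ι).Nonempty := univ_nonempty
  -- min and max of columns of P^k
  set m : ℕ → ι → ℝ := fun k s => univ.inf' hne (fun u => (P ^ k) u s) with hm
  set M : ℕ → ι → ℝ := fun k s => univ.sup' hne (fun u => (P ^ k) u s) with hM
  have hmle : ∀ k s u, m k s ≤ (P ^ k) u s := fun k s u => inf'_le _ (mem_univ u)
  have hleM : ∀ k s u, (P ^ k) u s ≤ M k s := fun k s u => le_sup' (fun u => (P ^ k) u s) (mem_univ u)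
  have hrowk : ∀ k u, ∑ s, (P ^ k) u s = 1 := by
    intro k
    induction k with
    | zero => intro u; simp [Matrix.one_apply]
    | succ k ih =>
      intro u
      have : ∀ s, (P ^ (k+1)) u s = ∑ v, (P ^ k) u v * P v s := by
        intro s; rw [pow_succ, Matrix.mul_apply]
      simp_rw [this]
      rw [Finset.sum_comm]
      simp_rw [← Finset.mul_sum, hrow]
      simpa using ih u
  have hnonneg : ∀ k u s, 0 ≤ (P ^ k) u s := by
    intro k
    induction k with
    | zero => intro u s; rw [pow_zero, Matrix.one_apply]; positivity
    | succ k ih =>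
      intro u s
      rw [pow_succ', Matrix.mul_apply]
      exact Finset.sum_nonneg fun v _ => mul_nonneg (hpos u v).le (ih v s)
  -- key step
  have hstep : ∀ k u s, (P ^ (k+1)) u s = ∑ v, P u v * (P ^ k) v s := by
    intro k u s; rw [pow_succ', Matrix.mul_apply]
  have hmono : ∀ k u s, m k s ≤ (P ^ (k+1)) u s ∧ (P ^ (k+1)) u s ≤ M k s := by
    intro k u s
    rw [hstep]
    constructor
    · calc m k s = ∑ v, P u v * m k s := by rw [← Finset.sum_mul, hrow, one_mul]
        _ ≤ ∑ v, P u v * (P ^ k) v s :=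
          Finset.sum_le_sum fun v _ => mul_le_mul_of_nonneg_left (hmle k s v) (hpos u v).le
    · calc ∑ v, P u v * (P ^ k) v s ≤ ∑ v, P u v * M k s :=
          Finset.sum_le_sum fun v _ => mul_le_mul_of_nonneg_left (hleM k s v) (hpos u v).le
        _ = M k s := by rw [← Finset.sum_mul, hrow, one_mul]
  have hmmono : ∀ s, Monotone (fun k => m k s) := by
    intro s
    apply monotone_nat_of_le_succ
    intro k
    apply Finset.le_inf'
    intro u _
    exact (hmono k u s).1
  have hManti : ∀ s, Antitone (fun k => M k s) := by
    intro s
    apply antitone_nat_of_succ_le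
    intro k
    apply Finset.sup'_le
    intro u _
    exact (hmono k u s).2
  -- delta
  obtain ⟨u0⟩ := ‹Nonempty ι›
  set δ : ℝ := univ.inf' hne (fun p : ι => univ.inf' hne (fun v => P p v)) with hδ
  have hδle : ∀ u v, δ ≤ P u v := fun u v =>
    le_trans (inf'_le _ (mem_univ u)) (inf'_le _ (mem_univ v))
  have hδpos : 0 < δ := by
    rw [hδ]
    apply (Finset.lt_inf'_iff _).2
    intro u _
    exact (Finset.lt_inf'_iff _).2 fun v _ => hpos u v
  set N : ℕ := Fintype.card ι with hN
  set r : ℝ := 1 - N * δ with hr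
  have hNδ : (N : ℝ) * δ ≤ 1 := by
    have : (N : ℝ) * δ = ∑ _v : ι, δ := by simp [hN, mul_comm]
    rw [this, ← hrow u0]
    exact Finset.sum_le_sum fun v _ => hδle u0 v
  have hr0 : 0 ≤ r := by rw [hr]; linarith
  have hr1 : r < 1 := by
    rw [hr]
    have : 0 < (N : ℝ) * δ := by
      apply mul_pos _ hδpos
      exact_mod_cast Fintype.card_pos
    linarith
  -- contraction
  have hcontr : ∀ k s, M (k+1) s - m (k+1) s ≤ r * (M k s - m k s) := by
    intro k s
    set T : ℝ := ∑ v, (P ^ k) v s with hT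
    have hdecomp : ∀ u, (P ^ (k+1)) u s = δ * T + ∑ v, (P u v - δ) * (P ^ k) v s := by
      intro u
      rw [hstep, hT, Finset.mul_sum, ← Finset.sum_add_distrib]
      congr 1; ext v; ring
    have hwsum : ∀ u : ι, ∑ v, (P u v - δ) = r := by
      intro u
      rw [Finset.sum_sub_distrib, hrow, hr]
      simp [hN, mul_comm]
    have hub : ∀ u, (P ^ (k+1)) u s ≤ δ * T + r * M k s := by
      intro u
      rw [hdecomp u]
      gcongr
      calc ∑ v, (P u v - δ) * (P ^ k) v s ≤ ∑ v, (P u v - δ) * M k s :=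
          Finset.sum_le_sum fun v _ =>
            mul_le_mul_of_nonneg_left (hleM k s v) (by linarith [hδle u v])
        _ = r * M k s := by rw [← Finset.sum_mul, hwsum u]
    have hlb : ∀ u, δ * T + r * m k s ≤ (P ^ (k+1)) u s := by
      intro u
      rw [hdecomp u]
      gcongr
      calc r * m k s = ∑ v, (P u v - δ) * m k s := by rw [← Finset.sum_mul, hwsum u]
        _ ≤ ∑ v, (P u v - δ) * (P ^ k) v s :=
          Finset.sum_le_sum fun v _ =>
            mul_le_mul_of_nonneg_left (hmle k s v) (by linarith [hδle u v])
    have h1 : M (k+1) s ≤ δ * T + r * M k s := Finset.sup'_le _ _ fun u _ => hub u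
    have h2 : δ * T + r * m k s ≤ m (k+1) s := Finset.le_inf' _ _ fun u _ => hlb u
    have := sub_le_sub h1 h2
    linarith [this]
  have hgap : ∀ k s, M k s - m k s ≤ r ^ k := by
    intro k s
    induction k with
    | zero =>
      have h1 : M 0 s ≤ 1 := Finset.sup'_le _ _ fun u _ => by
        rw [pow_zero, Matrix.one_apply]; split <;> norm_num
      have h2 : 0 ≤ m 0 s := Finset.le_inf' _ _ fun u _ => hnonneg 0 u s
      simpa using by linarith
    | succ k ih =>
      calc M (k+1) s - m (k+1) s ≤ r * (M k s - m k s) := hcontr k s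
        _ ≤ r * r ^ k := mul_le_mul_of_nonneg_left ih hr0
        _ = r ^ (k+1) := (pow_succ' r k).symm
  -- limit
  have hmM : ∀ k s, m k s ≤ M k s := fun k s =>
    le_trans (hmle k s u0) (hleM k s u0)
  have hbdd : ∀ s, BddAbove (Set.range fun k => m k s) := by
    intro s
    refine ⟨M 0 s, ?_⟩
    rintro x ⟨k, rfl⟩
    exact le_trans (hmM k s) (hManti s (Nat.zero_le k))
  set π : ι → ℝ := fun s => ⨆ k, m k s with hπ
  have hmtendsto : ∀ s, Tendsto (fun k => m k s) atTop (nhds (π s)) := fun s =>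
    tendsto_atTop_ciSup (hmmono s) (hbdd s)
  have hgap0 : Tendsto (fun k : ℕ => r ^ k) atTop (nhds 0) :=
    tendsto_pow_atTop_nhds_zero_of_lt_one hr0 hr1
  have hMtendsto : ∀ s, Tendsto (fun k => M k s) atTop (nhds (π s)) := by
    intro s
    have : Tendsto (fun k => m k s + (M k s - m k s)) atTop (nhds (π s + 0)) := by
      apply Tendsto.add (hmtendsto s)
      apply squeeze_zero (fun k => by linarith [hmM k s]) (fun k => hgap k s) hgap0
    simpa using this
  have hPtendsto : ∀ u s, Tendsto (fun k : ℕ => (P ^ k) u s) atTop (nhds (π s)) := by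
    intro u s
    exact tendsto_of_tendsto_of_tendsto_of_le_of_le (hmtendsto s) (hMtendsto s)
      (fun k => hmle k s u) (fun k => hleM k s u)
  have hπpos : ∀ s, 0 < π s := by
    intro s
    have h1 : m 1 s ≤ π s := le_ciSup (hbdd s) 1
    have h2 : δ ≤ m 1 s := Finset.le_inf' _ _ fun u _ => by
      simpa using hδle u s
    linarith [hδpos]
  have hπsum : ∑ s, π s = 1 := by
    have h1 : Tendsto (fun k : ℕ => ∑ s, (P ^ k) u0 s) atTop (nhds (∑ s, π s)) :=
      tendsto_finset_sum _ fun s _ => hPtendsto u0 s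
    have h2 : Tendsto (fun k : ℕ => ∑ s, (P ^ k) u0 s) atTop (nhds 1) := by
      simpa [hrowk] using tendsto_const_nhds (α := ℝ) (f := atTop (α := ℕ))
    exact tendsto_nhds_unique h1 h2
  have hπstat : ∀ s, ∑ u, π u * P u s = π s := by
    intro s
    have h1 : Tendsto (fun k : ℕ => (P ^ (k+1)) u0 s) atTop (nhds (π s)) :=
      (hPtendsto u0 s).comp (tendsto_add_atTop_nat 1)
    have h2 : Tendsto (fun k : ℕ => (P ^ (k+1)) u0 s) atTop (nhds (∑ v, π v * P v s)) := by
      have : ∀ k, (P ^ (k+1)) u0 s = ∑ v, (P ^ k) u0 v * P v s := by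
        intro k; rw [pow_succ, Matrix.mul_apply]
      simp_rw [this]
      exact tendsto_finset_sum _ fun v _ => (hPtendsto u0 v).mul_const _
    exact (tendsto_nhds_unique h2 h1)
  refine ⟨π, ⟨fun s => (hπpos s).le, hπsum, hπstat⟩, ?_, hπpos, hPtendsto⟩
  rintro π' ⟨hπ'0, hπ'sum, hπ'stat⟩
  have hstatk : ∀ k s, ∑ u, π' u * (P ^ k) u s = π' s := by
    intro k
    induction k with
    | zero => intro s; simp [Matrix.one_apply]
    | succ k ih =>
      intro s
      have : ∀ u, (P ^ (k+1)) u s = ∑ v, (P ^ k) u v * P v s := by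
        intro u; rw [pow_succ, Matrix.mul_apply]
      simp_rw [this, Finset.mul_sum]
      rw [Finset.sum_comm]
      simp_rw [← mul_assoc, ← Finset.sum_mul, ih]
      exact hπ'stat s
  funext s
  have h1 : Tendsto (fun k : ℕ => ∑ u, π' u * (P ^ k) u s) atTop (nhds (π' s)) := by
    simpa [hstatk] using tendsto_const_nhds (α := ℝ) (f := atTop (α := ℕ))
  have h2 : Tendsto (fun k : ℕ => ∑ u, π' u * (P ^ k) u s) atTop (nhds (∑ u, π' u * π s)) :=
    tendsto_finset_sum _ fun u _ => (hPtendsto u s).const_mul _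
  have h3 : ∑ u, π' u * π s = π s := by rw [← Finset.sum_mul, hπ'sum, one_mul]
  rw [← h3]
  exact tendsto_nhds_unique h1 h2

/-- **Stability of the observation sequence** (Theorem 1).
For the system `Y_{k+1} = A S_k + D_k`, `S_{k,i} = 1_{[Y_{k,i} ≥ c_i]}` with `D_{k,i} ∼ μ i`
i.i.d. over `k` and mutually independent over `i`, the one-step transition matrix `P` of the
observation chain on `{0,1}^n` has all entries positive, is row stochastic, admits a unique
stationary probability vector `π`, which is everywhere positive, and the `k`-step transition
probabilities converge to `π`. -/
theorem stmt0 (n : ℕ) (hn : 2 ≤ n) (A : Matrix (Fin n) (Fin n) ℝ) (c : Fin n → ℝ)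
    (μ : Fin n → Measure ℝ) [∀ i, IsProbabilityMeasure (μ i)]
    (hup : ∀ i, 0 < μ i (Set.Ici (c i + ∑ j, |A i j|)))
    (hdown : ∀ i, 0 < μ i (Set.Iio (c i - ∑ j, |A i j|)))
    (P : Matrix (Fin n → Bool) (Fin n → Bool) ℝ)
    (hP : ∀ u s, P u s = ∏ i, if s i
        then (μ i (Set.Ici (c i - (A.mulVec (fun j => bval (u j))) i))).toReal
        else (μ i (Set.Iio (c i - (A.mulVec (fun j => bval (u j))) i))).toReal) :
    (∀ u s, 0 < P u s) ∧ (∀ u, ∑ s, P u s = 1) ∧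
    ∃ π : (Fin n → Bool) → ℝ,
      ((∀ s, 0 ≤ π s) ∧ (∑ s, π s = 1) ∧ (∀ s, ∑ u, π u * P u s = π s)) ∧
      (∀ π' : (Fin n → Bool) → ℝ,
        ((∀ s, 0 ≤ π' s) ∧ (∑ s, π' s = 1) ∧ (∀ s, ∑ u, π' u * P u s = π' s)) → π' = π) ∧
      (∀ s, 0 < π s) ∧
      (∀ u s, Tendsto (fun k : ℕ => (P ^ k) u s) atTop (nhds (π s))) := by
  classical
  -- bound on the drift term
  have hw : ∀ (u : Fin n → Bool) (i : Fin n),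
      |(A.mulVec (fun j => bval (u j))) i| ≤ ∑ j, |A i j| := by
    intro u i
    calc |(A.mulVec (fun j => bval (u j))) i| = |∑ j, A i j * bval (u j)| := by
          rw [Matrix.mulVec, dotProduct]
      _ ≤ ∑ j, |A i j * bval (u j)| := Finset.abs_sum_le_sum_abs _ _
      _ ≤ ∑ j, |A i j| := by
          apply Finset.sum_le_sum
          intro j _
          rw [abs_mul]
          have hb : |bval (u j)| ≤ 1 := by unfold bval; split <;> norm_num
          calc |A i j| * |bval (u j)| ≤ |A i j| * 1 :=
                mul_le_mul_of_nonneg_left hb (abs_nonneg _)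
            _ = |A i j| := mul_one _
  have hIci : ∀ (u : Fin n → Bool) (i : Fin n),
      0 < ((μ i) (Set.Ici (c i - (A.mulVec (fun j => bval (u j))) i))).toReal := by
    intro u i
    have hsub : Set.Ici (c i + ∑ j, |A i j|) ⊆
        Set.Ici (c i - (A.mulVec (fun j => bval (u j))) i) := by
      apply Set.Ici_subset_Ici.2
      have := hw u i
      have := neg_abs_le ((A.mulVec (fun j => bval (u j))) i)
      linarith
    have hpos : 0 < (μ i) (Set.Ici (c i - (A.mulVec (fun j => bval (u j))) i)) :=
      lt_of_lt_of_le (hup i) (measure_mono hsub)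
    exact ENNReal.toReal_pos hpos.ne' (measure_ne_top _ _)
  have hIio : ∀ (u : Fin n → Bool) (i : Fin n),
      0 < ((μ i) (Set.Iio (c i - (A.mulVec (fun j => bval (u j))) i))).toReal := by
    intro u i
    have hsub : Set.Iio (c i - ∑ j, |A i j|) ⊆
        Set.Iio (c i - (A.mulVec (fun j => bval (u j))) i) := by
      apply Set.Iio_subset_Iio
      have := hw u i
      have := le_abs_self ((A.mulVec (fun j => bval (u j))) i)
      linarith
    have hpos : 0 < (μ i) (Set.Iio (c i - (A.mulVec (fun j => bval (u j))) i)) :=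
      lt_of_lt_of_le (hdown i) (measure_mono hsub)
    exact ENNReal.toReal_pos hpos.ne' (measure_ne_top _ _)
  have hpos : ∀ u s, 0 < P u s := by
    intro u s
    rw [hP]
    apply Finset.prod_pos
    intro i _
    split
    · exact hIci u i
    · exact hIio u i
  have hrow : ∀ u, ∑ s, P u s = 1 := by
    intro u
    simp_rw [hP]
    rw [← Fintype.prod_sum
      (fun i (b : Bool) => if b
        then ((μ i) (Set.Ici (c i - (A.mulVec (fun j => bval (u j))) i))).toReal
        else ((μ i) (Set.Iio (c i - (A.mulVec (fun j => bval (u j))) i))).toReal)]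
    rw [Finset.prod_eq_one]
    intro i _
    rw [Fintype.sum_bool]
    simp only [Bool.false_eq_true, if_false, if_true]
    have h1 : (μ i) (Set.Ici (c i - (A.mulVec (fun j => bval (u j))) i)) +
        (μ i) (Set.Iio (c i - (A.mulVec (fun j => bval (u j))) i)) = 1 := by
      rw [add_comm, ← Set.compl_Iio]
      rw [measure_add_measure_compl measurableSet_Iio]
      exact measure_univ
    rw [← ENNReal.toReal_add (measure_ne_top _ _) (measure_ne_top _ _), h1, ENNReal.toReal_one]
  obtain ⟨π, h1, h2, h3, h4⟩ := markov_main P hpos hrow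
  exact ⟨hpos, hrow, π, h1, h2, h3, h4⟩
end

section
/- Let n ≥ 2 and let Φ denote the cumulative distribution function of the standard Gaussian distribution N(0,1). For A ∈ ℝ^{n×n} and c ∈ ℝ^n define P_{A,c}(u,s) = ∏_{i=1}^n (1 − Φ(c_i − (Au)_i))^{s_i} · Φ(c_i − (Au)_i)^{1−s_i} for u, s ∈ {0,1}^n. If A, Â ∈ ℝ^{n×n} and c, ĉ ∈ ℝ^n satisfy P_{A,c}(u,s) = P_{Â,ĉ}(u,s) for all u, s ∈ {0,1}^n, then A = Â and c = ĉ. -/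
open MeasureTheory Matrix

/-- The cumulative distribution function of the standard Gaussian distribution `N(0,1)`. -/
noncomputable def gaussCDF (x : ℝ) : ℝ :=
  ((ProbabilityTheory.gaussianReal 0 1) (Set.Iic x)).toReal

open ProbabilityTheory in
lemma gaussCDF_eq (x : ℝ) :
    gaussCDF x = ∫ t in Set.Iic x, gaussianPDFReal 0 1 t := by
  rw [gaussCDF, gaussianReal_apply_eq_integral 0 one_ne_zero,
    ENNReal.toReal_ofReal (setIntegral_nonneg measurableSet_Iic
      fun t _ => gaussianPDFReal_nonneg 0 1 t)]

open ProbabilityTheory in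
lemma setIntegral_gauss_pos {s : Set ℝ} (hpos : 0 < volume s) :
    0 < ∫ t in s, gaussianPDFReal 0 1 t := by
  rw [setIntegral_pos_iff_support_of_nonneg_ae
    (Filter.Eventually.of_forall fun t => gaussianPDFReal_nonneg 0 1 t)
    ((integrable_gaussianPDFReal 0 1).integrableOn)]
  have : Function.support (gaussianPDFReal 0 1) = Set.univ := by
    ext t; simp [Function.mem_support, (gaussianPDFReal_pos 0 1 t one_ne_zero).ne']
  rw [this, Set.univ_inter]; exact hpos

lemma gaussCDF_pos (x : ℝ) : 0 < gaussCDF x := by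
  rw [gaussCDF_eq]
  exact setIntegral_gauss_pos (by simp)

open ProbabilityTheory in
lemma gaussCDF_lt_one (x : ℝ) : gaussCDF x < 1 := by
  have h1 : ∫ t, gaussianPDFReal 0 1 t = 1 := integral_gaussianPDFReal_eq_one 0 one_ne_zero
  have hsplit : (∫ t in Set.Iic x, gaussianPDFReal 0 1 t) +
      (∫ t in Set.Ioi x, gaussianPDFReal 0 1 t) = 1 := by
    rw [← h1, ← Set.compl_Iic]
    exact integral_add_compl measurableSet_Iic (integrable_gaussianPDFReal 0 1)
  have hpos : 0 < ∫ t in Set.Ioi x, gaussianPDFReal 0 1 t :=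
    setIntegral_gauss_pos (by simp)
  rw [gaussCDF_eq]; linarith

open ProbabilityTheory in
lemma gaussCDF_strictMono : StrictMono gaussCDF := by
  intro x y hxy
  rw [gaussCDF_eq, gaussCDF_eq]
  have hIic : Set.Iic y = Set.Iic x ∪ Set.Ioc x y := (Set.Iic_union_Ioc_eq_Iic hxy.le).symm
  rw [hIic, setIntegral_union (Set.Iic_disjoint_Ioc le_rfl) measurableSet_Ioc
    ((integrable_gaussianPDFReal 0 1).integrableOn) ((integrable_gaussianPDFReal 0 1).integrableOn)]
  have := setIntegral_gauss_pos (s := Set.Ioc x y) (by simp [hxy])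
  linarith

lemma gaussCDF_injective : Function.Injective gaussCDF := gaussCDF_strictMono.injective

lemma prod_ite_erase {n : ℕ} (i : Fin n) (a b : Fin n → ℝ) :
    (∏ j, if j = i then a j else b j) = a i * ∏ j ∈ Finset.univ.erase i, b j := by
  classical
  rw [← Finset.mul_prod_erase _ (fun j => if j = i then a j else b j) (Finset.mem_univ i),
    Finset.prod_congr rfl (fun j hj => if_neg (Finset.ne_of_mem_erase hj))]
  simp

lemma key {n : ℕ} (p q : Fin n → ℝ) (hp : ∀ i, 0 < p i)
    (hq : ∀ i, 0 < q i)
    (h0 : ∏ i, p i = ∏ i, q i)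
    (i : Fin n)
    (h1 : (∏ j, if j = i then 1 - p j else p j) = ∏ j, if j = i then 1 - q j else q j) :
    p i = q i := by
  classical
  have hRp : (0:ℝ) < ∏ j ∈ Finset.univ.erase i, p j :=
    Finset.prod_pos fun j _ => hp j
  have hRq : (0:ℝ) < ∏ j ∈ Finset.univ.erase i, q j :=
    Finset.prod_pos fun j _ => hq j
  have e0 : p i * ∏ j ∈ Finset.univ.erase i, p j = q i * ∏ j ∈ Finset.univ.erase i, q j := by
    rwa [Finset.mul_prod_erase _ _ (Finset.mem_univ i),
      Finset.mul_prod_erase _ _ (Finset.mem_univ i)]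
  have e1 : (1 - p i) * ∏ j ∈ Finset.univ.erase i, p j
      = (1 - q i) * ∏ j ∈ Finset.univ.erase i, q j := by
    rwa [prod_ite_erase i (fun j => 1 - p j) p, prod_ite_erase i (fun j => 1 - q j) q] at h1
  have hR : (∏ j ∈ Finset.univ.erase i, p j) = ∏ j ∈ Finset.univ.erase i, q j := by nlinarith
  rw [hR] at e0
  exact mul_right_cancel₀ hRq.ne' e0

/-- **Identifiability** (Theorem 3). Under i.i.d. standard Gaussian disturbances, equality of
the transition matrices `P_{A,c}(u,s) = ∏_i (1 − Φ(c_i − (Au)_i))^{s_i} Φ(c_i − (Au)_i)^{1−s_i}`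
on `{0,1}^n` forces equality of the parameters. -/
theorem stmt3 (n : ℕ) (hn : 2 ≤ n)
    (A Ahat : Matrix (Fin n) (Fin n) ℝ) (c chat : Fin n → ℝ)
    (h : ∀ u s : Fin n → Bool,
      (∏ i, if s i then 1 - gaussCDF (c i - (A.mulVec (fun j => bval (u j))) i)
            else gaussCDF (c i - (A.mulVec (fun j => bval (u j))) i)) =
      (∏ i, if s i then 1 - gaussCDF (chat i - (Ahat.mulVec (fun j => bval (u j))) i)
            else gaussCDF (chat i - (Ahat.mulVec (fun j => bval (u j))) i))) :
    A = Ahat ∧ c = chat := by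
  classical
  -- Pointwise equality of the CDF arguments, for each binary input u and coordinate i.
  have harg : ∀ (u : Fin n → Bool) (i : Fin n),
      c i - (A.mulVec (fun j => bval (u j))) i
        = chat i - (Ahat.mulVec (fun j => bval (u j))) i := by
    intro u i
    apply gaussCDF_injective
    apply key (p := fun i => gaussCDF (c i - (A.mulVec (fun j => bval (u j))) i))
      (q := fun i => gaussCDF (chat i - (Ahat.mulVec (fun j => bval (u j))) i))
      (fun i => gaussCDF_pos _) (fun i => gaussCDF_pos _)
    · have := h u (fun _ => false)
      simpa using this
    · have := h u (fun j => decide (j = i))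
      simpa using this
  -- u = 0 gives c = chat
  have hc : c = chat := by
    funext i
    have := harg (fun _ => false) i
    simpa [Matrix.mulVec, dotProduct, bval] using this
  -- u = e_j gives A = Ahat
  have hA : A = Ahat := by
    ext i j
    have := harg (fun k => decide (k = j)) i
    rw [hc] at this
    have hAv : ∀ (M : Matrix (Fin n) (Fin n) ℝ),
        (M.mulVec (fun k => bval (decide (k = j)))) i = M i j := by
      intro M
      simp [Matrix.mulVec, dotProduct, bval, mul_ite]
    rw [hAv A, hAv Ahat] at this
    linarith
  exact ⟨hA, hc⟩
end

section
/- Let n ≥ 2, c ∈ ℝ^n, η ∈ (0, 1/2), and A ∈ ℝ^{n×n} such that for every 1 ≤ i ≤ n there exists j ≠ i with a_{ij} ≠ 0. Suppose real numbers d_{i1}, d_{i2}, d_{i3} satisfy: d_{i1} < c_i − (As)_i and d_{i3} ≥ c_i − (As)_i for all s ∈ {0,1}^n, and d_{i2} = c_i − (1/2)·(A·1_n)_i, where 1_n is the all-ones vector. For a matrix M ∈ ℝ^{n×n} define q_M(i,s) := η·1_{[d_{i1} ≥ c_i − (Ms)_i]} + (1−2η)·1_{[d_{i2} ≥ c_i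 − (Ms)_i]} + η·1_{[d_{i3} ≥ c_i − (Ms)_i]}. Then there exists Â ∈ ℝ^{n×n} with Â ≠ A such that d_{i1} < c_i − (Âs)_i for all i and all s ∈ {0,1}^n, and q_Â(i,s) = q_A(i,s) for all 1 ≤ i ≤ n and all s ∈ {0,1}^n. -/
/-
Each `q_M(i,s)` only records on which side of the finitely many thresholds `c_i - d_{ik}` the
value `(Ms)_i` lies. Taking `Â = A + t • E`, with `E` a nonnegative nonzero matrix, raises every
`(As)_i` by `t (Es)_i ≥ 0`; a value already at or above a threshold stays there, and one strictly
below stays strictly below once `t > 0` is small, since there are only finitely many `(i, s)`.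
-/

open Matrix Filter Topology

lemma bval_nonneg (b : Bool) : 0 ≤ bval b := by
  unfold bval; split <;> norm_num

lemma eventually_sub_mul_le_iff {a b w : ℝ} (hw : 0 ≤ w) :
    ∀ᶠ t in 𝓝[>] (0 : ℝ), (a - t * w ≤ b ↔ a ≤ b) := by
  by_cases hab : a ≤ b
  · filter_upwards [self_mem_nhdsWithin] with t (ht : 0 < t)
    have : 0 ≤ t * w := mul_nonneg ht.le hw
    exact ⟨fun _ => hab, fun _ => by linarith⟩
  · have hlim : Tendsto (fun t : ℝ => a - t * w) (𝓝[>] 0) (𝓝 a) := by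
      have : Continuous (fun t : ℝ => a - t * w) := by fun_prop
      simpa using (this.tendsto 0).mono_left nhdsWithin_le_nhds
    filter_upwards [hlim.eventually (lt_mem_nhds (not_le.mp hab))] with t ht
    exact iff_of_false (not_le.mpr ht) hab

lemma single_one_mulVec_nonneg {n : Type*} [Fintype n] [DecidableEq n] (k : n) {v : n → ℝ}
    (hv : 0 ≤ v) : 0 ≤ single k k (1 : ℝ) *ᵥ v := by
  rw [single_mulVec, one_mul]
  intro j
  rcases eq_or_ne j k with rfl | h
  · simpa using hv j
  · simp [h]

theorem stmt5_general (n : ℕ) (hn : 2 ≤ n)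
    (A : Matrix (Fin n) (Fin n) ℝ) (c : Fin n → ℝ)
    (η : ℝ)
    (d1 d2 d3 : Fin n → ℝ)
    (hd1 : ∀ (i : Fin n) (s : Fin n → Bool), d1 i < c i - (A.mulVec (fun j => bval (s j))) i)
    (q : Matrix (Fin n) (Fin n) ℝ → Fin n → (Fin n → Bool) → ℝ)
    (hq : ∀ M i s, q M i s =
        η * (if c i - (M.mulVec (fun j => bval (s j))) i ≤ d1 i then 1 else 0)
      + (1 - 2 * η) * (if c i - (M.mulVec (fun j => bval (s j))) i ≤ d2 i then 1 else 0)
      + η * (if c i - (M.mulVec (fun j => bval (s j))) i ≤ d3 i then 1 else 0)) :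
    ∃ Ahat : Matrix (Fin n) (Fin n) ℝ, Ahat ≠ A ∧
      (∀ (i : Fin n) (s : Fin n → Bool),
        d1 i < c i - (Ahat.mulVec (fun j => bval (s j))) i) ∧
      (∀ (i : Fin n) (s : Fin n → Bool), q Ahat i s = q A i s) := by
  let k : Fin n := ⟨0, by omega⟩
  let E : Matrix (Fin n) (Fin n) ℝ := single k k 1
  have hE (s : Fin n → Bool) : 0 ≤ E *ᵥ fun j => bval (s j) :=
    single_one_mulVec_nonneg k fun j => bval_nonneg (s j)
  have hshift (t : ℝ) (i : Fin n) (s : Fin n → Bool) :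
      c i - ((A + t • E) *ᵥ fun j => bval (s j)) i
        = c i - (A *ᵥ fun j => bval (s j)) i - t * (E *ᵥ fun j => bval (s j)) i := by
    simp only [add_mulVec, smul_mulVec, Pi.add_apply, Pi.smul_apply, smul_eq_mul]
    ring
  have hside (d : Fin n → ℝ) : ∀ᶠ t in 𝓝[>] (0 : ℝ), ∀ (i : Fin n) (s : Fin n → Bool),
      (c i - ((A + t • E) *ᵥ fun j => bval (s j)) i ≤ d i ↔
        c i - (A *ᵥ fun j => bval (s j)) i ≤ d i) :=
    eventually_all.2 fun i => eventually_all.2 fun s => by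
      simpa only [hshift] using eventually_sub_mul_le_iff (hE s i)
  obtain ⟨t, ⟨⟨h1, h2, h3⟩, ht⟩⟩ :=
    ((hside d1).and ((hside d2).and (hside d3))).and self_mem_nhdsWithin |>.exists
  refine ⟨A + t • E, fun h => ?_, fun i s => ?_, fun i s => ?_⟩
  · have hkk := congrFun (congrFun h k) k
    simp [E] at hkk
    exact ht.ne' hkk
  · exact not_le.mp fun h => (not_le.mpr (hd1 i s)) ((h1 i s).mp h)
  · rw [hq, hq]
    simp only [h1 i s, h2 i s, h3 i s]

/-- **Non-identifiability under discrete disturbances** (Theorem 3′).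
If each disturbance `D_{k,i}` takes the values `d_{i1}, d_{i2}, d_{i3}` with probabilities
`η, 1−2η, η`, with `d_{i1} < c_i − (As)_i ≤ d_{i3}` for all binary `s` and
`d_{i2} = c_i − (1/2)(A·1)_i`, and every row of `A` has a nonzero off-diagonal entry, then there
exists `Â ≠ A` with `d_{i1} < c_i − (Âs)_i` for all `i, s` yielding exactly the same
transition probabilities `q_M(i,s) = P{D_{k,i} ≥ c_i − (Ms)_i}`. -/
theorem stmt5 (n : ℕ) (hn : 2 ≤ n)
    (A : Matrix (Fin n) (Fin n) ℝ) (c : Fin n → ℝ)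
    (η : ℝ) (hη : η ∈ Set.Ioo (0 : ℝ) (1/2))
    (hA : ∀ i, ∃ j, j ≠ i ∧ A i j ≠ 0)
    (d1 d2 d3 : Fin n → ℝ)
    (hd1 : ∀ (i : Fin n) (s : Fin n → Bool), d1 i < c i - (A.mulVec (fun j => bval (s j))) i)
    (hd3 : ∀ (i : Fin n) (s : Fin n → Bool), c i - (A.mulVec (fun j => bval (s j))) i ≤ d3 i)
    (hd2 : ∀ i, d2 i = c i - (1/2) * (A.mulVec (fun _ => (1 : ℝ))) i)
    (q : Matrix (Fin n) (Fin n) ℝ → Fin n → (Fin n → Bool) → ℝ)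
    (hq : ∀ M i s, q M i s =
        η * (if c i - (M.mulVec (fun j => bval (s j))) i ≤ d1 i then 1 else 0)
      + (1 - 2 * η) * (if c i - (M.mulVec (fun j => bval (s j))) i ≤ d2 i then 1 else 0)
      + η * (if c i - (M.mulVec (fun j => bval (s j))) i ≤ d3 i then 1 else 0)) :
    ∃ Ahat : Matrix (Fin n) (Fin n) ℝ, Ahat ≠ A ∧
      (∀ (i : Fin n) (s : Fin n → Bool),
        d1 i < c i - (Ahat.mulVec (fun j => bval (s j))) i) ∧
      (∀ (i : Fin n) (s : Fin n → Bool), q Ahat i s = q A i s) :=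
  stmt5_general n hn A c η d1 d2 d3 hd1 q hq
end

section
/- Let n ≥ 1 and let p : {0,1}^n → ℝ be a probability mass function (p(s) ≥ 0, Σ_s p(s) = 1) such that p(0_n) > 0 and p(e_i) > 0 for every standard basis vector e_i, 1 ≤ i ≤ n. For s ∈ {0,1}^n let α(s) := (s_1, …, s_n, −1)^T ∈ ℝ^{n+1}. Then the (n+1)×(n+1) matrix M := Σ_{s ∈ {0,1}^n} p(s) · α(s) α(s)^T is positive definite. -/
/-!
The quadratic form of `M` is `xᵀ M x = Σ_s p(s) (α(s) ⬝ x)²`, a sum of nonnegative terms, so it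
suffices to find, for each `x ≠ 0`, one `s` of positive mass with `α(s) ⬝ x ≠ 0`. If the last
coordinate of `x` is nonzero, `s = 0` works since `α(0) ⬝ x = -x_{n+1}`; otherwise some `x_i ≠ 0`
and `s = e_i` works since `α(e_i) ⬝ x = x_i - x_{n+1} = x_i`.
-/

open Matrix

section SecondMoment

variable {ι m : Type*} [Fintype ι] [Fintype m]

theorem dotProduct_sum_smul_vecMulVec_self_mulVec (w : ι → ℝ) (v : ι → m → ℝ) (x : m → ℝ) :
    x ⬝ᵥ ((∑ i, w i • vecMulVec (v i) (v i)) *ᵥ x) = ∑ i, w i * (v i ⬝ᵥ x) ^ 2 := by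
  simp only [sum_mulVec, dotProduct_sum, smul_mulVec, vecMulVec_mulVec, dotProduct_smul,
    smul_eq_mul, op_smul_eq_smul, dotProduct_comm x (v _)]
  exact Finset.sum_congr rfl fun i _ => by ring

theorem posDef_sum_smul_vecMulVec_self {w : ι → ℝ} {v : ι → m → ℝ} (hw : ∀ i, 0 ≤ w i)
    (hv : ∀ x : m → ℝ, x ≠ 0 → ∃ i, 0 < w i ∧ v i ⬝ᵥ x ≠ 0) :
    (∑ i, w i • vecMulVec (v i) (v i)).PosDef := by
  have hsemi : (∑ i, w i • vecMulVec (v i) (v i)).PosSemidef :=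
    posSemidef_sum _ fun i _ => by
      simpa using (posSemidef_vecMulVec_self_star (v i)).smul (hw i)
  refine posDef_iff_dotProduct_mulVec.mpr ⟨hsemi.isHermitian, fun x hx => ?_⟩
  obtain ⟨i, hwi, hvi⟩ := hv x hx
  rw [star_trivial, dotProduct_sum_smul_vecMulVec_self_mulVec]
  exact Finset.sum_pos' (fun j _ => mul_nonneg (hw j) (sq_nonneg _))
    ⟨i, Finset.mem_univ _, mul_pos hwi (sq_pos_of_ne_zero hvi)⟩

end SecondMoment

theorem snoc_dotProduct {n : ℕ} (u : Fin n → ℝ) (a : ℝ) (x : Fin (n + 1) → ℝ) :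
    (Fin.snoc u a : Fin (n + 1) → ℝ) ⬝ᵥ x = u ⬝ᵥ Fin.init x + a * x (Fin.last n) := by
  simp [dotProduct, Fin.sum_univ_castSucc, Fin.init]

theorem bval_ite_eq_single {n : ℕ} (i : Fin n) :
    (fun j => bval (if j = i then true else false)) = Pi.single i 1 := by
  ext j
  by_cases h : j = i <;> simp [bval, h]

theorem stmt9_general (n : ℕ) (p : (Fin n → Bool) → ℝ)
    (hnn : ∀ s, 0 ≤ p s)
    (h0 : 0 < p (fun _ => false))
    (he : ∀ i : Fin n, 0 < p (fun j => if j = i then true else false)) :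
    (∑ s : Fin n → Bool, p s •
      Matrix.vecMulVec (Fin.snoc (fun i => bval (s i)) (-1 : ℝ))
        (Fin.snoc (fun i => bval (s i)) (-1 : ℝ))).PosDef := by
  refine posDef_sum_smul_vecMulVec_self hnn fun x hx => ?_
  by_cases hlast : x (Fin.last n) = 0
  · obtain ⟨i, hi⟩ : ∃ i, Fin.init x i ≠ 0 := by
      by_contra! hinit
      exact hx (funext fun j => Fin.lastCases hlast hinit j)
    refine ⟨_, he i, ?_⟩
    simp only [bval_ite_eq_single]
    simpa [snoc_dotProduct, hlast] using hi
  · exact ⟨_, h0, by simpa [snoc_dotProduct, bval] using hlast⟩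

/-- **Positive-definiteness of the second-moment matrix** (Step 2 of the proof of Theorem 4).
If `p` is a pmf on `{0,1}^n` assigning positive mass to the zero vector and to every unit
vector, and `α(s) = (s₁,…,sₙ,−1)ᵀ ∈ ℝ^{n+1}`, then `M = Σ_s p(s) α(s) α(s)ᵀ` is positive
definite. -/
theorem stmt9 (n : ℕ) (hn : 1 ≤ n) (p : (Fin n → Bool) → ℝ)
    (hnn : ∀ s, 0 ≤ p s) (hsum : ∑ s, p s = 1)
    (h0 : 0 < p (fun _ => false))
    (he : ∀ i : Fin n, 0 < p (fun j => if j = i then true else false)) :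
    (∑ s : Fin n → Bool, p s •
      Matrix.vecMulVec (Fin.snoc (fun i => bval (s i)) (-1 : ℝ))
        (Fin.snoc (fun i => bval (s i)) (-1 : ℝ))).PosDef :=
  stmt9_general n p hnn h0 he
end

section
/- Let S be a nonempty finite set, P a row-stochastic matrix on S, π a probability vector on S, and suppose there exist C > 0 and ρ ∈ (0,1) such that Σ_{z' ∈ S} |P^k(z,z') − π(z')| ≤ C·ρ^k for all z ∈ S and k ≥ 0. Let Θ ⊆ ℝ^d, let F : Θ × S → ℝ^m, and suppose there exist a constant L ≥ 0 and a function g : S → ℝ such that ‖F(θ,z) − F(κ,z)‖ ≤ L·g(z)·‖θ − κ‖ for all θ, κ ∈ Θ and all z ∈ S. For θ ∈ Θ define F̂(θ,z) := Σ_{k=0}^∞ ( Σ_{z'} P^k(z,z') F(θ,z') − Σ_{z'} π(z') F(θ,z') ). Then for all θ, κ ∈ Θ and all z ∈ S: ‖F̂(θ,z) − F̂(κ,z)‖ ≤ (C/(1−ρ)) · L · ( max_{z' ∈ S} g(z') ) · ‖θ − κ‖. -/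
/-!
The `k`-th term of `F̂(θ,z) − F̂(κ,z)` is the row `(P^k − 𝟙π)(z,·)` applied to `F(θ,·) − F(κ,·)`.
That row has `ℓ¹`-norm at most `Cρ^k` and `‖F(θ,z') − F(κ,z')‖ ≤ L (max g) ‖θ − κ‖`, so the terms
are dominated by a geometric series with sum `C/(1−ρ) · L (max g) ‖θ − κ‖`.
-/

open Matrix Finset

theorem norm_sum_smul_le_of_norm_le {ι E : Type*} [Fintype ι] [SeminormedAddCommGroup E]
    [NormedSpace ℝ E] (w : ι → ℝ) {v : ι → E} {B : ℝ} (hv : ∀ i, ‖v i‖ ≤ B) :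
    ‖∑ i, w i • v i‖ ≤ (∑ i, |w i|) * B := by
  rw [sum_mul]
  refine (norm_sum_le _ _).trans (sum_le_sum fun i _ => ?_)
  rw [norm_smul, Real.norm_eq_abs]
  exact mul_le_mul_of_nonneg_left (hv i) (abs_nonneg _)

section PoissonTerm

variable {S E : Type*} [Fintype S] [DecidableEq S] [SeminormedAddCommGroup E] [NormedSpace ℝ E]
  {P : Matrix S S ℝ} {π : S → ℝ} {z : S} {k : ℕ} {C ρ : ℝ}

/-- The `k`-th summand `(P^k f)(z) − π(f)` of the solution `Σ_k (P^k f − π(f))` of the Poisson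
equation for `f`. -/
def poissonTerm (P : Matrix S S ℝ) (π : S → ℝ) (f : S → E) (z : S) (k : ℕ) : E :=
  ∑ z', (P ^ k) z z' • f z' - ∑ z', π z' • f z'

theorem poissonTerm_eq_sum_sub_smul (f : S → E) :
    poissonTerm P π f z k = ∑ z', ((P ^ k) z z' - π z') • f z' := by
  simp only [poissonTerm, sub_smul, sum_sub_distrib]

theorem poissonTerm_sub (f h : S → E) :
    poissonTerm P π (f - h) z k = poissonTerm P π f z k - poissonTerm P π h z k := by
  simp only [poissonTerm_eq_sum_sub_smul, Pi.sub_apply, smul_sub, sum_sub_distrib]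

theorem norm_poissonTerm_le {f : S → E} {B : ℝ}
    (herg : ∑ z', |(P ^ k) z z' - π z'| ≤ C * ρ ^ k) (hf : ∀ z', ‖f z'‖ ≤ B) (hB : 0 ≤ B) :
    ‖poissonTerm P π f z k‖ ≤ C * ρ ^ k * B := by
  rw [poissonTerm_eq_sum_sub_smul]
  exact (norm_sum_smul_le_of_norm_le _ hf).trans (mul_le_mul_of_nonneg_right herg hB)

theorem summable_poissonTerm [CompleteSpace E] (hρ0 : 0 ≤ ρ) (hρ1 : ρ < 1)
    (herg : ∀ k, ∑ z', |(P ^ k) z z' - π z'| ≤ C * ρ ^ k) (f : S → E) :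
    Summable (poissonTerm P π f z) :=
  (((summable_geometric_of_lt_one hρ0 hρ1).mul_left C).mul_right (∑ z', ‖f z'‖)).of_norm_bounded
    fun k => norm_poissonTerm_le (herg k)
      (fun z' => single_le_sum (f := fun z' => ‖f z'‖) (fun _ _ => norm_nonneg _) (mem_univ z'))
      (sum_nonneg fun _ _ => norm_nonneg _)

theorem norm_tsum_poissonTerm_le [Nonempty S] (hρ0 : 0 ≤ ρ) (hρ1 : ρ < 1)
    (herg : ∀ k, ∑ z', |(P ^ k) z z' - π z'| ≤ C * ρ ^ k) {f : S → E} {B : ℝ}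
    (hf : ∀ z', ‖f z'‖ ≤ B) :
    ‖∑' k, poissonTerm P π f z k‖ ≤ C / (1 - ρ) * B := by
  have hB : 0 ≤ B := (norm_nonneg _).trans (hf (Classical.arbitrary S))
  have hgeom : HasSum (fun k => C * ρ ^ k * B) (C * (1 - ρ)⁻¹ * B) :=
    ((hasSum_geometric_of_lt_one hρ0 hρ1).mul_left C).mul_right B
  rw [div_eq_mul_inv]
  exact tsum_of_norm_bounded hgeom fun k => norm_poissonTerm_le (herg k) hf hB

end PoissonTerm

theorem stmt14_general {S : Type*} [Fintype S] [DecidableEq S] [Nonempty S] (d m : ℕ)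
    (P : Matrix S S ℝ)
    (π : S → ℝ)
    (C : ℝ) (ρ : ℝ) (hρ0 : 0 < ρ) (hρ1 : ρ < 1)
    (herg : ∀ (z : S) (k : ℕ), ∑ z', |(P ^ k) z z' - π z'| ≤ C * ρ ^ k)
    (Θ : Set (Fin d → ℝ)) (F : (Fin d → ℝ) → S → Fin m → ℝ)
    (L : ℝ) (hL : 0 ≤ L) (g : S → ℝ)
    (hlip : ∀ θ ∈ Θ, ∀ κ ∈ Θ, ∀ z : S, ‖F θ z - F κ z‖ ≤ L * g z * ‖θ - κ‖) :
    ∀ θ ∈ Θ, ∀ κ ∈ Θ, ∀ z : S,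
      ‖(∑' k : ℕ, ((∑ z', (P ^ k) z z' • F θ z') - ∑ z', π z' • F θ z'))
        - ∑' k : ℕ, ((∑ z', (P ^ k) z z' • F κ z') - ∑ z', π z' • F κ z')‖ ≤
      C / (1 - ρ) * L * (Finset.univ.sup' Finset.univ_nonempty g) * ‖θ - κ‖ := by
  intro θ hθ κ hκ z
  set M := Finset.univ.sup' Finset.univ_nonempty g
  have hF : ∀ z', ‖(F θ - F κ) z'‖ ≤ L * M * ‖θ - κ‖ := fun z' =>
    (hlip θ hθ κ hκ z').trans <| mul_le_mul_of_nonneg_right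
      (mul_le_mul_of_nonneg_left (le_sup' g (mem_univ z')) hL) (norm_nonneg _)
  have hsum := summable_poissonTerm (E := Fin m → ℝ) (P := P) (π := π) hρ0.le hρ1 (herg z)
  change ‖∑' k, poissonTerm P π (F θ) z k - ∑' k, poissonTerm P π (F κ) z k‖ ≤ _
  rw [← (hsum (F θ)).tsum_sub (hsum (F κ))]
  simp_rw [← poissonTerm_sub]
  calc _ ≤ C / (1 - ρ) * (L * M * ‖θ - κ‖) := norm_tsum_poissonTerm_le hρ0.le hρ1 (herg z) hF
    _ = _ := by ring

/-- **Lipschitz estimate for the parametrized Poisson equation solution** (proof of Theorem 6).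
If `F(·,z)` is `L g(z)`-Lipschitz on `Θ ⊆ ℝ^d` for each `z`, then under geometric ergodicity
`Σ_{z'} |P^k(z,z') − π(z')| ≤ C ρ^k` the parametrized solution
`F̂(θ,z) = Σ_{k≥0} (Σ_{z'} P^k(z,z') F(θ,z') − Σ_{z'} π(z') F(θ,z'))` satisfies
`‖F̂(θ,z) − F̂(κ,z)‖ ≤ (C/(1−ρ)) L (max_{z'} g(z')) ‖θ − κ‖` for `θ, κ ∈ Θ`. -/
theorem stmt14 {S : Type*} [Fintype S] [DecidableEq S] [Nonempty S] (d m : ℕ)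
    (P : Matrix S S ℝ) (hnn : ∀ z z', 0 ≤ P z z') (hrow : ∀ z, ∑ z', P z z' = 1)
    (π : S → ℝ) (hπnn : ∀ z, 0 ≤ π z) (hπ1 : ∑ z, π z = 1)
    (C : ℝ) (hC : 0 < C) (ρ : ℝ) (hρ0 : 0 < ρ) (hρ1 : ρ < 1)
    (herg : ∀ (z : S) (k : ℕ), ∑ z', |(P ^ k) z z' - π z'| ≤ C * ρ ^ k)
    (Θ : Set (Fin d → ℝ)) (F : (Fin d → ℝ) → S → Fin m → ℝ)
    (L : ℝ) (hL : 0 ≤ L) (g : S → ℝ)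
    (hlip : ∀ θ ∈ Θ, ∀ κ ∈ Θ, ∀ z : S, ‖F θ z - F κ z‖ ≤ L * g z * ‖θ - κ‖) :
    ∀ θ ∈ Θ, ∀ κ ∈ Θ, ∀ z : S,
      ‖(∑' k : ℕ, ((∑ z', (P ^ k) z z' • F θ z') - ∑ z', π z' • F θ z'))
        - ∑' k : ℕ, ((∑ z', (P ^ k) z z' • F κ z') - ∑ z', π z' • F κ z')‖ ≤
      C / (1 - ρ) * L * (Finset.univ.sup' Finset.univ_nonempty g) * ‖θ - κ‖ :=
  stmt14_general d m P π C ρ hρ0 hρ1 herg Θ F L hL g hlip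
end
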